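/- There exists an optimal schedule σ* in which the earlier-schedule jobs appear in increasing index order of start times, the later-schedule jobs appear in increasing index order of start times, and the machine does not idle in the later schedule: the later-schedule job with the smallest start time starts exactly at time T_2, and every other later-schedule job starts exactly at the completion time of the later-schedule job immediately preceding it. -/

import Mathlib

/-!
Admissible start times lie in the box `[0, Σ p + k]`, so there are finitely many optimal
schedules; take the lexicographically least vector of start times among them.

If two jobs `i < j` of one half are processed in the order `j, i`, choose such a pair with no
job of that half starting in between. Moving `i` to the start of `j` and `j` right behind it keeps
the schedule feasible, does not increase `Σ w C` (WSPT: `p_i w_j ≤ p_j w_i`), and keeps both new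
deviations within the old deviations of `i` and `j` (since `C_i(π*) + p_j ≤ C_j(π*)`); but the
new start vector is lexicographically smaller.

Once the later half is in index order, the jobs `J_1, …, J_j` fit into `[0, T₁]` and
`[T₂, C_j(σ)]`, so `C_j(π*) ≤ T₁ + C_j(σ) - T₂ < C_j(σ)`. Hence if the unit before the start of a
later job `J_j` with `S_j > T₂` is idle, starting `J_j` one unit earlier strictly decreases `Σ w C`
without increasing `Δ_j`, contradicting optimality.
-/

open Finset

variable (n : ℕ)

/-- Completion time of job `j` in the original WSPT schedule `π*`:
`C_j(π*) = p_1 + ⋯ + p_j`. -/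
def Corig (p : Fin n → ℤ) (j : Fin n) : ℤ :=
  ∑ i ∈ Finset.univ.filter (fun i => i ≤ j), p i

/-- Start time of job `j` in the original schedule `π*`. -/
def Sorig (p : Fin n → ℤ) (j : Fin n) : ℤ :=
  Corig n p j - p j

/-- A feasible schedule: integer start times `σ j ≥ 0`, pairwise disjoint open
processing intervals, and every job either completes by `T1` (earlier schedule)
or starts at or after `T2` (later schedule). -/
def Feasible (p : Fin n → ℤ) (T1 T2 : ℤ) (σ : Fin n → ℤ) : Prop :=
  (∀ j, 0 ≤ σ j) ∧
  (∀ i j, i ≠ j → σ i + p i ≤ σ j ∨ σ j + p j ≤ σ i) ∧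
  (∀ j, σ j + p j ≤ T1 ∨ T2 ≤ σ j)

/-- Time deviation of job `j`: `Δ_j(σ) = |C_j(σ) − C_j(π*)|`. -/
def Dev (p : Fin n → ℤ) (σ : Fin n → ℤ) (j : Fin n) : ℤ :=
  |σ j + p j - Corig n p j|

/-- Maximum time deviation `Δ_max(σ) = max_{1≤j≤n} Δ_j(σ)` (all deviations are
nonnegative, so folding `max` from `0` gives the maximum when `n ≥ 1`). -/
def Dmax (p : Fin n → ℤ) (σ : Fin n → ℤ) : ℤ :=
  Finset.fold max 0 (Dev n p σ) Finset.univ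

/-- Admissible: feasible with `Δ_max(σ) ≤ k`. -/
def Admissible (p : Fin n → ℤ) (T1 T2 k : ℤ) (σ : Fin n → ℤ) : Prop :=
  Feasible n p T1 T2 σ ∧ Dmax n p σ ≤ k

/-- Total weighted completion time `Σ_j w_j · C_j(σ)`. -/
def WObj (p w : Fin n → ℤ) (σ : Fin n → ℤ) : ℤ :=
  ∑ j, w j * (σ j + p j)

/-- The objective `Z(σ) = μ·Δ_max(σ) + Σ_j w_j·C_j(σ)`. -/
def Zval (p w : Fin n → ℤ) (μ : ℚ) (σ : Fin n → ℤ) : ℚ :=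
  μ * (Dmax n p σ : ℚ) + (WObj n p w σ : ℚ)

/-- Optimal: admissible and minimizing `Z` over all admissible schedules. -/
def Optimal (p w : Fin n → ℤ) (T1 T2 k : ℤ) (μ : ℚ) (σ : Fin n → ℤ) : Prop :=
  Admissible n p T1 T2 k σ ∧
  ∀ τ, Admissible n p T1 T2 k τ → Zval n p w μ σ ≤ Zval n p w μ τ

/-- `t ≥ 0` is an earlier-schedule idle time unit of `σ`: no job is processed
during `[t, t+1]` and some earlier-schedule job starts at or after `t+1`. -/
def IdleUnit (p : Fin n → ℤ) (T1 : ℤ) (σ : Fin n → ℤ) (t : ℤ) : Prop :=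
  0 ≤ t ∧ (∀ m, ¬(σ m ≤ t ∧ t + 1 ≤ σ m + p m)) ∧
  ∃ j, σ j + p j ≤ T1 ∧ t + 1 ≤ σ j

def NonOverlapping {ι : Type*} (p σ : ι → ℤ) : Prop :=
  ∀ i j, i ≠ j → σ i + p i ≤ σ j ∨ σ j + p j ≤ σ i

section NonOverlapping

variable {ι : Type*} {p σ : ι → ℤ}

theorem NonOverlapping.add_le_of_lt (h : NonOverlapping p σ) (hp : ∀ j, 0 < p j) {i j : ι}
    (hij : σ i < σ j) : σ i + p i ≤ σ j := by
  rcases h i j (by rintro rfl; exact hij.false) with h | h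
  · exact h
  · have := hp j; omega

theorem NonOverlapping.injective (h : NonOverlapping p σ) (hp : ∀ j, 0 < p j) :
    Function.Injective σ := by
  intro i j hij
  by_contra hne
  rcases h i j hne with h | h
  · have := hp i; omega
  · have := hp j; omega

theorem NonOverlapping.sum_le [DecidableEq ι] (h : NonOverlapping p σ) (hp : ∀ j, 0 < p j)
    {a b : ℤ} (hab : a ≤ b) (S : Finset ι) (hS : ∀ m ∈ S, a ≤ σ m ∧ σ m + p m ≤ b) :
    ∑ m ∈ S, p m ≤ b - a := by
  induction S using induction_on_max_value σ generalizing b with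
  | empty => simpa using hab
  | insert m S hmS hmax ih =>
    have hm := hS m (mem_insert_self m S)
    have hS' : ∀ x ∈ S, a ≤ σ x ∧ σ x + p x ≤ σ m := fun x hx =>
      ⟨(hS x (mem_insert_of_mem hx)).1, h.add_le_of_lt hp <|
        (hmax x hx).lt_of_ne ((h.injective hp).ne (ne_of_mem_of_not_mem hx hmS))⟩
    rw [sum_insert hmS]
    have := ih hm.1 hS'
    omega

end NonOverlapping

theorem exists_adjacent_inversion {ι : Type*} [LinearOrder ι] (σ : ι → ℤ) (H : ι → Prop)
    {i j : ι} (hij : i < j) (hi : H i) (hj : H j) (hji : σ j < σ i) :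
    ∃ i j, i < j ∧ H i ∧ H j ∧ σ j < σ i ∧ ∀ m, H m → σ m ≤ σ j ∨ σ i ≤ σ m := by
  obtain ⟨d, hd⟩ : ∃ d, (σ i - σ j).toNat = d := ⟨_, rfl⟩
  induction d using Nat.strong_induction_on generalizing i j with
  | _ d ih =>
    by_cases hbetween : ∃ m, H m ∧ σ j < σ m ∧ σ m < σ i
    · obtain ⟨m, hm, hjm, hmi⟩ := hbetween
      rcases lt_or_gt_of_ne (show m ≠ i by rintro rfl; exact hmi.false) with hlt | hgt
      · exact ih _ (by omega) (hlt.trans hij) hm hj hjm rfl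
      · exact ih _ (by omega) hgt hi hm hmi rfl
    · push Not at hbetween
      exact ⟨i, j, hij, hi, hj, hji, fun m hm => (le_or_gt _ _).imp_right (hbetween m hm)⟩

section Schedule

variable {n : ℕ} {p w σ τ : Fin n → ℤ} {T1 T2 k : ℤ} {μ : ℚ}

theorem Feasible.nonOverlapping (h : Feasible n p T1 T2 σ) : NonOverlapping p σ :=
  h.2.1

theorem dev_le_dmax (p σ : Fin n → ℤ) (j : Fin n) : Dev n p σ j ≤ Dmax n p σ :=
  (le_fold_max _).2 (.inr ⟨j, mem_univ j, le_rfl⟩)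

theorem dmax_nonneg (p σ : Fin n → ℤ) : 0 ≤ Dmax n p σ :=
  (le_fold_max _).2 (.inl le_rfl)

theorem corig_add_le_corig (hp : ∀ j, 0 < p j) {i j : Fin n} (hij : i < j) :
    Corig n p i + p j ≤ Corig n p j := by
  have hj : j ∉ univ.filter (· ≤ i) := by simpa using hij
  calc Corig n p i + p j = ∑ m ∈ insert j (univ.filter (· ≤ i)), p m := by
        rw [sum_insert hj, add_comm]; rfl
    _ ≤ Corig n p j := by
        refine sum_le_sum_of_subset_of_nonneg (fun m => ?_) fun m _ _ => (hp m).le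
        simp only [mem_insert, mem_filter, mem_univ, true_and]
        rintro (rfl | h)
        exacts [le_rfl, h.trans hij.le]

theorem corig_le_sum (hp : ∀ j, 0 < p j) (j : Fin n) : Corig n p j ≤ ∑ i, p i :=
  sum_le_sum_of_subset_of_nonneg (subset_univ _) fun i _ _ => (hp i).le

theorem Admissible.start_le (hp : ∀ j, 0 < p j) (h : Admissible n p T1 T2 k σ) (j : Fin n) :
    σ j ≤ ∑ i, p i + k := by
  have := (abs_le.1 ((dev_le_dmax p σ j).trans h.2)).2
  have := corig_le_sum hp j
  have := hp j
  omega

theorem corig_le_of_later_sorted (hp : ∀ j, 0 < p j) (hT1 : 0 ≤ T1)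
    (hσ : Feasible n p T1 T2 σ)
    (hsorted : ∀ i j : Fin n, i < j → T2 ≤ σ i → T2 ≤ σ j → σ i < σ j)
    {j : Fin n} (hj : T2 ≤ σ j) :
    Corig n p j ≤ T1 + (σ j + p j - T2) := by
  have hno := hσ.nonOverlapping
  rw [Corig, ← sum_filter_add_sum_filter_not _ fun i => σ i + p i ≤ T1]
  gcongr
  · simpa using hno.sum_le hp hT1 _ fun m hm => ⟨hσ.1 m, (mem_filter.1 hm).2⟩
  · refine hno.sum_le hp (by linarith [hp j]) _ fun m hm => ?_
    simp only [mem_filter, mem_univ, true_and] at hm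
    have hm2 : T2 ≤ σ m := (hσ.2.2 m).resolve_left hm.2
    refine ⟨hm2, ?_⟩
    rcases hm.1.lt_or_eq with hmj | rfl
    · linarith [hno.add_le_of_lt hp (hsorted m j hmj hm2 hj), hp j]
    · exact le_rfl

theorem Feasible.of_eq_outside_block (hσ : Feasible n p T1 T2 σ) (B : Set (Fin n)) {a b : ℤ}
    (ha : 0 ≤ a) (hab : b ≤ T1 ∨ T2 ≤ a) (hout : ∀ m ∉ B, τ m = σ m)
    (hsep : ∀ m ∉ B, σ m + p m ≤ a ∨ b ≤ σ m) (hin : ∀ m ∈ B, a ≤ τ m ∧ τ m + p m ≤ b)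
    (hB : ∀ i ∈ B, ∀ j ∈ B, i ≠ j → τ i + p i ≤ τ j ∨ τ j + p j ≤ τ i) :
    Feasible n p T1 T2 τ := by
  obtain ⟨hpos, hno, hhalves⟩ := hσ
  refine ⟨fun m => ?_, fun i j hij => ?_, fun m => ?_⟩
  · by_cases hm : m ∈ B
    · linarith [(hin m hm).1]
    · rw [hout m hm]; exact hpos m
  · by_cases hi : i ∈ B <;> by_cases hj : j ∈ B
    · exact hB i hi j hj hij
    · have := hin i hi; have := hsep j hj; rw [hout j hj]; omega
    · have := hin j hj; have := hsep i hi; rw [hout i hi]; omega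
    · rw [hout i hi, hout j hj]; exact hno i j hij
  · by_cases hm : m ∈ B
    · have := hin m hm; omega
    · rw [hout m hm]; exact hhalves m

theorem dmax_le_of_eq_outside (B : Set (Fin n)) (hout : ∀ m ∉ B, τ m = σ m)
    (hin : ∀ m ∈ B, Dev n p τ m ≤ Dmax n p σ) : Dmax n p τ ≤ Dmax n p σ :=
  (fold_max_le _).2 ⟨dmax_nonneg p σ, fun m _ => by
    by_cases hm : m ∈ B
    · exact hin m hm
    · rw [Dev, hout m hm]; exact dev_le_dmax p σ m⟩

theorem wobj_sub_wobj (p w σ τ : Fin n → ℤ) :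
    WObj n p w τ - WObj n p w σ = ∑ m, w m * (τ m - σ m) := by
  rw [WObj, WObj, ← sum_sub_distrib]
  congr 1 with m
  ring

theorem zval_le_zval (hμ : 0 ≤ μ) (hW : WObj n p w τ ≤ WObj n p w σ)
    (hD : Dmax n p τ ≤ Dmax n p σ) : Zval n p w μ τ ≤ Zval n p w μ σ :=
  add_le_add (mul_le_mul_of_nonneg_left (by exact_mod_cast hD) hμ) (by exact_mod_cast hW)

theorem zval_lt_zval (hμ : 0 ≤ μ) (hW : WObj n p w τ < WObj n p w σ)
    (hD : Dmax n p τ ≤ Dmax n p σ) : Zval n p w μ τ < Zval n p w μ σ :=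
  add_lt_add_of_le_of_lt (mul_le_mul_of_nonneg_left (by exact_mod_cast hD) hμ)
    (by exact_mod_cast hW)

theorem Optimal.of_zval_le (hσ : Optimal n p w T1 T2 k μ σ) (hτ : Admissible n p T1 T2 k τ)
    (hZ : Zval n p w μ τ ≤ Zval n p w μ σ) : Optimal n p w T1 T2 k μ τ :=
  ⟨hτ, fun ρ hρ => hZ.trans (hσ.2 ρ hρ)⟩

end Schedule

section Exchange

variable {n : ℕ} {p w σ : Fin n → ℤ} {T1 T2 k : ℤ} {μ : ℚ}

theorem Admissible.exists_swap (hp : ∀ j, 0 < p j) (hw : ∀ j, 0 < w j)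
    (hwspt : ∀ i j : Fin n, i ≤ j → p i * w j ≤ p j * w i) (hμ : 0 ≤ μ)
    (hσ : Admissible n p T1 T2 k σ) {i j : Fin n} (hij : i < j) (hji : σ j < σ i)
    (hhalf : σ i + p i ≤ T1 ∨ T2 ≤ σ j)
    (hsep : ∀ m, m ≠ i → m ≠ j → σ m + p m ≤ σ j ∨ σ i + p i ≤ σ m) :
    ∃ τ, Admissible n p T1 T2 k τ ∧ Zval n p w μ τ ≤ Zval n p w μ σ ∧ toLex τ < toLex σ := by
  have hji' : σ j + p j ≤ σ i := hσ.1.nonOverlapping.add_le_of_lt hp hji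
  let τ : Fin n → ℤ := fun m => if m = i then σ j else if m = j then σ j + p i else σ m
  have hτi : τ i = σ j := if_pos rfl
  have hτj : τ j = σ j + p i := by simp [τ, hij.ne']
  have hout : ∀ m ∉ ({i, j} : Set (Fin n)), τ m = σ m := by
    intro m hm
    simp only [Set.mem_insert_iff, Set.mem_singleton_iff, not_or] at hm
    simp [τ, hm.1, hm.2]
  have hD : Dmax n p τ ≤ Dmax n p σ := by
    refine dmax_le_of_eq_outside _ hout ?_
    have hc := corig_add_le_corig hp hij
    have hdi := abs_le.1 (dev_le_dmax p σ i)
    have hdj := abs_le.1 (dev_le_dmax p σ j)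
    rintro m (rfl | rfl) <;> rw [Dev, abs_le]
    · rw [hτi]; constructor <;> linarith [hp m]
    · rw [hτj]; constructor <;> linarith [hp i]
  have hW : WObj n p w τ ≤ WObj n p w σ := by
    have hdiff := wobj_sub_wobj p w σ τ
    rw [Fintype.sum_eq_add i j hij.ne fun m hm => by rw [hout m (by simpa using hm), sub_self,
      mul_zero], hτi, hτj] at hdiff
    -- `w i (σ j - σ i) + w j p i ≤ w j p i - w i p j ≤ 0`
    nlinarith [hwspt i j hij.le, mul_nonneg (hw i).le (sub_nonneg.2 hji')]
  have hfeas : Feasible n p T1 T2 τ := by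
    refine hσ.1.of_eq_outside_block _ (hσ.1.1 j) hhalf hout (fun m hm => ?_) ?_ ?_
    · simp only [Set.mem_insert_iff, Set.mem_singleton_iff, not_or] at hm
      exact hsep m hm.1 hm.2
    · rintro m (rfl | rfl)
      · rw [hτi]; constructor <;> linarith
      · rw [hτj]; constructor <;> linarith [hp i]
    · rintro a (rfl | rfl) b (rfl | rfl) hab
      · exact absurd rfl hab
      · exact .inl (by rw [hτi, hτj])
      · exact .inr (by rw [hτi, hτj])
      · exact absurd rfl hab
  refine ⟨τ, ⟨hfeas, hD.trans hσ.2⟩, zval_le_zval hμ hW hD, i, fun m hm => ?_, ?_⟩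
  · exact hout m (by simp [hm.ne, (hm.trans hij).ne])
  · change τ i < σ i
    rwa [hτi]

theorem Admissible.exists_shift_left (hw : ∀ j, 0 < w j) (hμ : 0 ≤ μ)
    (hT2 : 0 ≤ T2) (hσ : Admissible n p T1 T2 k σ) {j : Fin n} (hj : T2 < σ j)
    (hC : Corig n p j < σ j + p j)
    (hidle : ∀ m, m ≠ j → σ m + p m ≤ σ j - 1 ∨ σ j + p j ≤ σ m) :
    ∃ τ, Admissible n p T1 T2 k τ ∧ Zval n p w μ τ < Zval n p w μ σ := by
  let τ : Fin n → ℤ := fun m => if m = j then σ j - 1 else σ m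
  have hτj : τ j = σ j - 1 := if_pos rfl
  have hout : ∀ m ∉ ({j} : Set (Fin n)), τ m = σ m := fun m hm => if_neg hm
  have hD : Dmax n p τ ≤ Dmax n p σ := by
    refine dmax_le_of_eq_outside _ hout ?_
    rintro m rfl
    have hdm := abs_le.1 (dev_le_dmax p σ m)
    have := dmax_nonneg p σ
    rw [Dev, abs_le, hτj]
    constructor <;> linarith
  have hW : WObj n p w τ < WObj n p w σ := by
    have hdiff := wobj_sub_wobj p w σ τ
    rw [Fintype.sum_eq_single j fun m hm => by rw [hout m hm, sub_self, mul_zero], hτj] at hdiff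
    linarith [hw j]
  have hfeas : Feasible n p T1 T2 τ := by
    refine hσ.1.of_eq_outside_block _ (by omega) (.inr (by omega)) hout (fun m hm => hidle m hm)
      ?_ ?_
    · rintro m rfl
      rw [hτj]; constructor <;> linarith
    · rintro a rfl b rfl hab
      exact absurd rfl hab
  exact ⟨τ, ⟨hfeas, hD.trans hσ.2⟩, zval_lt_zval hμ hW hD⟩

end Exchange

section LexLeast

variable {n : ℕ} {p w σ : Fin n → ℤ} {T1 T2 k : ℤ} {μ : ℚ}

def IsLexLeastOptimal (p w : Fin n → ℤ) (T1 T2 k : ℤ) (μ : ℚ) (σ : Fin n → ℤ) : Prop :=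
  Optimal n p w T1 T2 k μ σ ∧ ∀ τ, Optimal n p w T1 T2 k μ τ → toLex σ ≤ toLex τ

theorem exists_isLexLeastOptimal (hp : ∀ j, 0 < p j) (hadm : ∃ σ, Admissible n p T1 T2 k σ) :
    ∃ σ, IsLexLeastOptimal p w T1 T2 k μ σ := by
  have hfin : {σ | Admissible n p T1 T2 k σ}.Finite :=
    (Set.finite_Icc 0 fun _ => ∑ i, p i + k).subset fun σ hσ => ⟨hσ.1.1, hσ.start_le hp⟩
  obtain ⟨σ₀, hσ₀, hmin₀⟩ := Set.exists_min_image _ (Zval n p w μ) hfin hadm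
  obtain ⟨σ, hσ, hmin⟩ := Set.exists_min_image {σ | Optimal n p w T1 T2 k μ σ} toLex
    (hfin.subset fun _ h => h.1) ⟨σ₀, hσ₀, hmin₀⟩
  exact ⟨σ, hσ, hmin⟩

theorem IsLexLeastOptimal.sorted (hp : ∀ j, 0 < p j) (hw : ∀ j, 0 < w j)
    (hwspt : ∀ i j : Fin n, i ≤ j → p i * w j ≤ p j * w i) (hμ : 0 ≤ μ)
    (hσ : IsLexLeastOptimal p w T1 T2 k μ σ) (H : Fin n → Prop)
    (hhalf : ∀ i j, H i → H j → σ i + p i ≤ T1 ∨ T2 ≤ σ j)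
    (hsep : ∀ i j m, H i → H j → ¬H m → σ m + p m ≤ σ j ∨ σ i + p i ≤ σ m) :
    ∀ i j, i < j → H i → H j → σ i < σ j := by
  intro i j hij hi hj
  have hno := hσ.1.1.1.nonOverlapping
  have hinj := hno.injective hp
  by_contra! hle
  obtain ⟨i, j, hij, hi, hj, hji, hadj⟩ :=
    exists_adjacent_inversion σ H hij hi hj (hle.lt_of_ne (hinj.ne hij.ne'))
  have hsep' : ∀ m, m ≠ i → m ≠ j → σ m + p m ≤ σ j ∨ σ i + p i ≤ σ m := by
    intro m hmi hmj
    by_cases hm : H m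
    · rcases hadj m hm with h | h
      · exact .inl (hno.add_le_of_lt hp (h.lt_of_ne (hinj.ne hmj)))
      · exact .inr (hno.add_le_of_lt hp (h.lt_of_ne (hinj.ne hmi).symm))
    · exact hsep i j m hi hj hm
  obtain ⟨τ, hτ, hZ, hlex⟩ := hσ.1.1.exists_swap hp hw hwspt hμ hij hji (hhalf i j hi hj) hsep'
  exact (hσ.2 τ (hσ.1.of_zval_le hτ hZ)).not_gt hlex

end LexLeast

section LaterSchedule

variable {n : ℕ} {p w σ : Fin n → ℤ} {T1 T2 k : ℤ} {μ : ℚ}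

theorem Optimal.exists_end_eq_start (hp : ∀ j, 0 < p j) (hw : ∀ j, 0 < w j) (hμ : 0 ≤ μ)
    (hT1 : 0 ≤ T1) (hT12 : T1 < T2) (hσ : Optimal n p w T1 T2 k μ σ)
    (hsorted : ∀ i j : Fin n, i < j → T2 ≤ σ i → T2 ≤ σ j → σ i < σ j) :
    ∀ j, T2 < σ j → ∃ m, σ m + p m = σ j := by
  intro j hj
  by_contra! hnone
  have hC : Corig n p j < σ j + p j := by
    linarith [corig_le_of_later_sorted hp hT1 hσ.1.1 hsorted hj.le]
  have hidle : ∀ m, m ≠ j → σ m + p m ≤ σ j - 1 ∨ σ j + p j ≤ σ m := by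
    intro m hmj
    rcases hσ.1.1.nonOverlapping m j hmj with h | h
    · exact .inl (by have := hnone m; omega)
    · exact .inr h
  obtain ⟨τ, hτ, hZ⟩ := hσ.1.exists_shift_left hw hμ (by omega) hj hC hidle
  exact (hσ.2 τ hτ).not_gt hZ

theorem Feasible.first_later_start_eq (hp : ∀ j, 0 < p j) (hT12 : T1 < T2)
    (hσ : Feasible n p T1 T2 σ) (hend : ∀ j, T2 < σ j → ∃ m, σ m + p m = σ j)
    {j : Fin n} (hj : T2 ≤ σ j) (hfirst : ∀ m, T2 ≤ σ m → σ j ≤ σ m) : σ j = T2 := by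
  by_contra hne
  obtain ⟨m, hm⟩ := hend j (hj.lt_of_ne (Ne.symm hne))
  rcases hσ.2.2 m with h | h
  · omega
  · linarith [hfirst m h, hp m]

theorem Feasible.exists_prev_end_eq_start (hp : ∀ j, 0 < p j) (hT12 : T1 < T2)
    (hσ : Feasible n p T1 T2 σ) (hend : ∀ j, T2 < σ j → ∃ m, σ m + p m = σ j)
    {j : Fin n} (hbefore : ∃ m, T2 ≤ σ m ∧ σ m < σ j) :
    ∃ i, T2 ≤ σ i ∧ σ i < σ j ∧ (∀ m, T2 ≤ σ m → σ m < σ j → σ m ≤ σ i) ∧ σ i + p i = σ j := by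
  have hno := hσ.nonOverlapping
  obtain ⟨i, hi, hmax⟩ := (univ.filter fun m => T2 ≤ σ m ∧ σ m < σ j).exists_max_image σ
    (by obtain ⟨m, hm⟩ := hbefore; exact ⟨m, by simpa using hm⟩)
  simp only [mem_filter, mem_univ, true_and] at hi hmax
  refine ⟨i, hi.1, hi.2, fun m h1 h2 => hmax m ⟨h1, h2⟩, ?_⟩
  by_contra hne
  have hgap : σ i + p i < σ j := (hno.add_le_of_lt hp hi.2).lt_of_ne hne
  obtain ⟨m, hm⟩ := hend j (by linarith [hi.1, hi.2])
  have hmi : m ≠ i := by rintro rfl; exact hgap.ne hm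
  rcases hσ.2.2 m with h | h
  · linarith [hi.1, hi.2]
  · have hlt := (hmax m ⟨h, by linarith [hp m]⟩).lt_of_ne ((hno.injective hp).ne hmi)
    linarith [hno.add_le_of_lt hp hlt]

end LaterSchedule

theorem stmt_6_general (n : ℕ) (p w : Fin n → ℤ) (T1 T2 k : ℤ) (μ : ℚ)
    (hp : ∀ j, 0 < p j) (hw : ∀ j, 0 < w j)
    (hwspt : ∀ i j : Fin n, i ≤ j → p i * w j ≤ p j * w i)
    (hT1 : 0 ≤ T1) (hT12 : T1 < T2) (hμ : 0 ≤ μ)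
    (hadm : ∃ σ, Admissible n p T1 T2 k σ) :
    ∃ σ, Optimal n p w T1 T2 k μ σ ∧
      (∀ i j : Fin n, i < j → σ i + p i ≤ T1 → σ j + p j ≤ T1 → σ i < σ j) ∧
      (∀ i j : Fin n, i < j → T2 ≤ σ i → T2 ≤ σ j → σ i < σ j) ∧
      (∀ j, T2 ≤ σ j → (∀ m, T2 ≤ σ m → σ j ≤ σ m) → σ j = T2) ∧
      (∀ j, T2 ≤ σ j → (∃ m, T2 ≤ σ m ∧ σ m < σ j) →
        ∃ i, T2 ≤ σ i ∧ σ i < σ j ∧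
          (∀ m, T2 ≤ σ m → σ m < σ j → σ m ≤ σ i) ∧ σ i + p i = σ j) := by
  obtain ⟨σ, hσ⟩ := exists_isLexLeastOptimal (w := w) (μ := μ) hp hadm
  have hfeas := hσ.1.1.1
  have hearlier := hσ.sorted hp hw hwspt hμ (fun m => σ m + p m ≤ T1) (fun _ _ hi _ => .inl hi)
    fun _ _ m hi _ hm => .inr (by linarith [(hfeas.2.2 m).resolve_left hm])
  have hlater := hσ.sorted hp hw hwspt hμ (fun m => T2 ≤ σ m) (fun _ _ _ hj => .inr hj)
    fun _ _ m _ hj hm => .inl (by linarith [not_le.1 hm, (hfeas.2.2 m).resolve_right hm])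
  have hend := hσ.1.exists_end_eq_start hp hw hμ hT1 hT12 hlater
  exact ⟨σ, hσ.1, hearlier, hlater, fun _ => hfeas.first_later_start_eq hp hT12 hend,
    fun _ _ => hfeas.exists_prev_end_eq_start hp hT12 hend⟩

/-- there exists an optimal schedule with both halves in WSPT
order and no idling in the later schedule: the later-schedule job with the
smallest start time starts exactly at `T2`, and every other later-schedule job
starts exactly at the completion time of the later-schedule job immediately
preceding it. -/
theorem stmt_6 (n : ℕ) (p w : Fin n → ℤ) (T1 T2 k : ℤ) (μ : ℚ)
    (hn : 0 < n) (hp : ∀ j, 0 < p j) (hw : ∀ j, 0 < w j)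
    (hwspt : ∀ i j : Fin n, i ≤ j → p i * w j ≤ p j * w i)
    (hT1 : 0 ≤ T1) (hT12 : T1 < T2) (hk : 0 ≤ k) (hμ : 0 ≤ μ)
    (hadm : ∃ σ, Admissible n p T1 T2 k σ)
    (hP : T1 < ∑ j, p j) :
    ∃ σ, Optimal n p w T1 T2 k μ σ ∧
      (∀ i j : Fin n, i < j → σ i + p i ≤ T1 → σ j + p j ≤ T1 → σ i < σ j) ∧
      (∀ i j : Fin n, i < j → T2 ≤ σ i → T2 ≤ σ j → σ i < σ j) ∧
      (∀ j, T2 ≤ σ j → (∀ m, T2 ≤ σ m → σ j ≤ σ m) → σ j = T2) ∧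
      (∀ j, T2 ≤ σ j → (∃ m, T2 ≤ σ m ∧ σ m < σ j) →
        ∃ i, T2 ≤ σ i ∧ σ i < σ j ∧
          (∀ m, T2 ≤ σ m → σ m < σ j → σ m ≤ σ i) ∧ σ i + p i = σ j) :=
  stmt_6_general n p w T1 T2 k μ hp hw hwspt hT1 hT12 hμ hadm
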